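/- For integers $n \ge 1$ and $0 < t_1 < t_2 < \pi$: $\frac{1}{\pi}\int_0^\pi \log\left(\frac{2}{\sqrt{2(1 - \cos t_1\cos t_2 - \sin t_1 \sin t_2\cos\theta)}}\right)\cos(n\theta)\, d\theta = \frac{1}{2n}\left(\tan(t_1/2)\cot(t_2/2)\right)^n$. -/

import Mathlib

/-!
The half-angle formulas give
`2 (1 - cos t₁ cos t₂ - sin t₁ sin t₂ cos θ) = c² (1 - 2 r cos θ + r²)` with
`c = 2 cos (t₁/2) sin (t₂/2)` and `r = tan (t₁/2) cot (t₂/2)`, where `|r| < 1` because `tan` is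
increasing. The kernel is therefore `log (2/c) - ½ log (1 - 2 r cos θ + r²)`, and
`log (1 - 2 r cos θ + r²) = 2 Re log (1 - r e^{iθ}) = -2 ∑ rᵏ cos (kθ) / k`; integrating this
series term by term against `cos (nθ)` leaves only the term `k = n`, equal to `-π rⁿ / n`.
-/

open Real intervalIntegral

theorem integral_cos_int_mul_eq_zero {m : ℤ} (hm : m ≠ 0) :
    ∫ θ in (0:ℝ)..π, cos (m * θ) = 0 := by
  rw [integral_comp_mul_left cos (Int.cast_ne_zero.mpr hm)]
  simp [sin_int_mul_pi]

theorem integral_cos_nat_mul_mul_cos_nat_mul (k : ℕ) {n : ℕ} (hn : n ≠ 0) :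
    ∫ θ in (0:ℝ)..π, cos (k * θ) * cos (n * θ) = if k = n then π / 2 else 0 := by
  have product_to_sum (θ : ℝ) : cos (k * θ) * cos (n * θ)
      = (cos ((k - n : ℤ) * θ) + cos ((k + n : ℤ) * θ)) / 2 := by
    push_cast
    rw [sub_mul, add_mul, cos_sub, cos_add]
    ring
  have hcont (m : ℤ) : Continuous fun θ : ℝ => cos (m * θ) := by fun_prop
  simp_rw [product_to_sum]
  rw [integral_div, integral_add ((hcont _).intervalIntegrable _ _)
    ((hcont _).intervalIntegrable _ _), integral_cos_int_mul_eq_zero (m := k + n) (by omega)]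
  split_ifs with hkn
  · simp [hkn]
  · rw [integral_cos_int_mul_eq_zero (by omega)]
    simp

theorem one_sub_two_mul_cos_add_sq_pos {r : ℝ} (hr : |r| < 1) (θ : ℝ) :
    0 < 1 - 2 * r * cos θ + r ^ 2 := by
  have hrcos : r * cos θ ≤ |r| :=
    calc r * cos θ ≤ |r| * |cos θ| := (le_abs_self _).trans (abs_mul _ _).le
      _ ≤ |r| := mul_le_of_le_one_right (abs_nonneg r) (abs_cos_le_one θ)
  nlinarith [sq_abs r]

theorem hasSum_log_one_sub_two_mul_cos_add_sq {r : ℝ} (hr : |r| < 1) (θ : ℝ) :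
    HasSum (fun k : ℕ => -2 * r ^ k / k * cos (k * θ)) (log (1 - 2 * r * cos θ + r ^ 2)) := by
  set z : ℂ := r * Complex.exp (θ * Complex.I)
  have hz : ‖z‖ < 1 := by simpa [z, Complex.norm_exp_ofReal_mul_I] using hr
  have hre_pow (k : ℕ) : (z ^ k / k).re = r ^ k / k * cos (k * θ) := by
    have : z ^ k = (r ^ k : ℝ) * Complex.exp ((k * θ : ℝ) * Complex.I) := by
      rw [mul_pow, ← Complex.exp_nat_mul]; push_cast; ring_nf
    rw [this, Complex.div_natCast_re, Complex.re_ofReal_mul, Complex.exp_ofReal_mul_I_re]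
    ring
  have hnormSq : Complex.normSq (1 - z) = 1 - 2 * r * cos θ + r ^ 2 := by
    rw [Complex.normSq_apply]
    simp only [z, Complex.sub_re, Complex.one_re, Complex.mul_re, Complex.ofReal_re,
      Complex.exp_ofReal_mul_I_re, Complex.ofReal_im, Complex.exp_ofReal_mul_I_im, zero_mul,
      sub_zero, Complex.sub_im, Complex.one_im, Complex.mul_im, add_zero, zero_sub]
    nlinarith [sin_sq_add_cos_sq θ]
  have hlog : log (1 - 2 * r * cos θ + r ^ 2) = -2 * (-Complex.log (1 - z)).re := by
    rw [Complex.neg_re, Complex.log_re, ← hnormSq, ← Complex.sq_norm, log_pow]; push_cast; ring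
  rw [hlog]
  refine ((Complex.hasSum_re (Complex.hasSum_taylorSeries_neg_log hz)).mul_left (-2)).congr_fun
    fun k => ?_
  rw [hre_pow]; ring

theorem abs_tan_mul_cot_lt_one {x y : ℝ} (hxy : |x| < y) (hy : y < π / 2) :
    |tan x * cot y| < 1 := by
  have hy0 : 0 < y := (abs_nonneg x).trans_lt hxy
  have htan_y : 0 < tan y := tan_pos_of_pos_of_lt_pi_div_two hy0 hy
  obtain ⟨hyx, hxy'⟩ := abs_lt.mp hxy
  have hlo : -tan y < tan x := by
    rw [← tan_neg]; exact tan_lt_tan_of_lt_of_lt_pi_div_two (by linarith) (by linarith) hyx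
  have hhi : tan x < tan y := tan_lt_tan_of_lt_of_lt_pi_div_two (by linarith) hy hxy'
  rw [cot_eq_cos_div_sin, ← inv_div, ← tan_eq_sin_div_cos, abs_mul, abs_inv,
    abs_of_pos htan_y, mul_inv_lt_iff₀ htan_y, one_mul]
  exact abs_lt.mpr ⟨hlo, hhi⟩

theorem two_mul_one_sub_cos_mul_cos_sub_sin_mul_sin_mul_cos {t₁ t₂ : ℝ}
    (h₁ : cos (t₁ / 2) ≠ 0) (h₂ : sin (t₂ / 2) ≠ 0) (θ : ℝ) :
    2 * (1 - cos t₁ * cos t₂ - sin t₁ * sin t₂ * cos θ)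
      = (2 * cos (t₁ / 2) * sin (t₂ / 2)) ^ 2
        * (1 - 2 * (tan (t₁ / 2) * cot (t₂ / 2)) * cos θ
          + (tan (t₁ / 2) * cot (t₂ / 2)) ^ 2) := by
  obtain ⟨x, rfl⟩ : ∃ x, t₁ = 2 * x := ⟨t₁ / 2, by ring⟩
  obtain ⟨y, rfl⟩ : ∃ y, t₂ = 2 * y := ⟨t₂ / 2, by ring⟩
  simp only [mul_div_cancel_left₀ _ (two_ne_zero (α := ℝ))] at *
  rw [cos_two_mul, cos_two_mul, sin_two_mul, sin_two_mul, tan_eq_sin_div_cos, cot_eq_cos_div_sin]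
  field_simp
  linear_combination
    (-2 * cos y ^ 2) * sin_sq_add_cos_sq x + (-2 * cos x ^ 2) * sin_sq_add_cos_sq y

theorem integral_log_one_sub_two_mul_cos_add_sq_mul_cos {r : ℝ} (hr : |r| < 1) {n : ℕ}
    (hn : n ≠ 0) :
    ∫ θ in (0:ℝ)..π, log (1 - 2 * r * cos θ + r ^ 2) * cos (n * θ) = -(π * r ^ n / n) := by
  set F : ℕ → ℝ → ℝ := fun k θ => -2 * r ^ k / k * (cos (k * θ) * cos (n * θ))
  have hbound (k : ℕ) (θ : ℝ) : ‖F k θ‖ ≤ 2 * |r| ^ k :=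
    calc ‖F k θ‖ = 2 * |r| ^ k * (k : ℝ)⁻¹ * (|cos (k * θ)| * |cos (n * θ)|) := by
          simp [F, div_eq_mul_inv]
      _ ≤ 2 * |r| ^ k * 1 * (1 * 1) := by
          gcongr
          exacts [Nat.cast_inv_le_one k, abs_cos_le_one _, abs_cos_le_one _]
      _ = 2 * |r| ^ k := by ring
  have hseries : HasSum (fun k => ∫ θ in (0:ℝ)..π, F k θ)
      (∫ θ in (0:ℝ)..π, log (1 - 2 * r * cos θ + r ^ 2) * cos (n * θ)) := by
    refine hasSum_integral_of_dominated_convergence (fun k _ => 2 * |r| ^ k)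
      (fun k => (by fun_prop : Continuous (F k)).aestronglyMeasurable)
      (fun k => .of_forall fun θ _ => hbound k θ)
      (.of_forall fun _ _ => (summable_geometric_of_lt_one (abs_nonneg r) hr).mul_left 2)
      intervalIntegrable_const (.of_forall fun θ _ => ?_)
    refine ((hasSum_log_one_sub_two_mul_cos_add_sq hr θ).mul_right (cos (n * θ))).congr_fun
      fun k => ?_
    simp only [F, mul_assoc]
  have hcoeff (k : ℕ) : ∫ θ in (0:ℝ)..π, F k θ = if k = n then -(π * r ^ n / n) else 0 := by
    simp only [F, integral_const_mul, integral_cos_nat_mul_mul_cos_nat_mul k hn]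
    split_ifs with hkn
    · subst hkn; ring
    · simp
  exact hseries.unique ((hasSum_ite_eq n _).congr_fun hcoeff)

/-- The `n ≥ 1` azimuthal Fourier cosine modes of the kernel `log (2/|x-x'|)` on the sphere:
`(1/π) ∫₀^π log(2/|x-x'|) cos(nθ) dθ = (tan(t₁/2) cot(t₂/2))ⁿ / (2n)`. -/
theorem log_kernel_mode_pos (n : ℕ) (hn : 1 ≤ n) (t₁ t₂ : ℝ)
    (h0 : 0 < t₁) (h12 : t₁ < t₂) (h2 : t₂ < π) :
    (1 / π) * ∫ θ in (0:ℝ)..π,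
        Real.log (2 / Real.sqrt (2 * (1 - Real.cos t₁ * Real.cos t₂
          - Real.sin t₁ * Real.sin t₂ * Real.cos θ))) * Real.cos (n * θ)
      = (1 / (2 * n)) * (Real.tan (t₁ / 2) * Real.cot (t₂ / 2)) ^ n := by
  have hcos : 0 < cos (t₁ / 2) := cos_pos_of_mem_Ioo ⟨by linarith, by linarith⟩
  have hsin : 0 < sin (t₂ / 2) := sin_pos_of_pos_of_lt_pi (by linarith) (by linarith)
  set r := tan (t₁ / 2) * cot (t₂ / 2)
  set c := 2 * cos (t₁ / 2) * sin (t₂ / 2)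
  have hr : |r| < 1 :=
    abs_tan_mul_cot_lt_one (by rw [abs_of_pos (half_pos h0)]; linarith) (by linarith)
  have hc : 0 < c := by positivity
  have hQ := one_sub_two_mul_cos_add_sq_pos hr
  have hkernel (θ : ℝ) :
      log (2 / sqrt (2 * (1 - cos t₁ * cos t₂ - sin t₁ * sin t₂ * cos θ))) * cos (n * θ)
        = log (2 / c) * cos (n * θ) - log (1 - 2 * r * cos θ + r ^ 2) * cos (n * θ) / 2 := by
    rw [two_mul_one_sub_cos_mul_cos_sub_sin_mul_sin_mul_cos hcos.ne' hsin.ne',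
      sqrt_mul (sq_nonneg c), sqrt_sq hc.le, ← div_div,
      log_div (by positivity) (sqrt_pos.mpr (hQ θ)).ne', log_sqrt (hQ θ).le]
    ring
  have hcos_n : ∫ θ in (0:ℝ)..π, cos (n * θ) = 0 := by
    exact_mod_cast integral_cos_int_mul_eq_zero (m := n) (by omega)
  simp_rw [hkernel]
  rw [integral_sub (Continuous.intervalIntegrable (by fun_prop) _ _)
      (Continuous.intervalIntegrable (by fun_prop (disch := exact fun θ => (hQ θ).ne')) _ _),
    integral_const_mul, integral_div, hcos_n,
    integral_log_one_sub_two_mul_cos_add_sq_mul_cos hr (by omega)]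
  field_simp
  ring
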